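/- arXiv:2201.09718 — 7 statements merged into one kernel-verified Lean document; each statement's English description precedes it below -/
import Mathlib

section
/- In the tight case j = k−1, with S = {v_1,…,v_s} a set of s jokers for B_0 and C_0 = B_0 − S, the (r−s, C_0)-infection process on K_n^k − S exactly tracks the original process: C_t = B_t − S for all t ∈ ℕ. -/
open Finset

open Classical in
noncomputable def bootStep (V : Finset ℕ) (E : Finset (Finset ℕ)) (j r : ℕ)
    (A : Finset (Finset ℕ)) : Finset (Finset ℕ) :=
  A ∪ (V.powersetCard j).filter (fun J =>
    ∃ K : Fin r → Finset ℕ, ∃ Js : Fin r → Finset ℕ,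
      Function.Injective K ∧ Function.Injective Js ∧
      ∀ i : Fin r, K i ∈ E ∧ Js i ∈ A ∧ Js i ∪ J ⊆ K i)

/-- The infected sets at time `t` of the bootstrap percolation process on a hypergraph
with vertex set `V`, edge set `E`, evolving on `j`-sets with infection threshold `r`. -/
noncomputable def bootProc (V : Finset ℕ) (E : Finset (Finset ℕ)) (j r : ℕ)
    (A0 : Finset (Finset ℕ)) (t : ℕ) : Finset (Finset ℕ) :=
  (bootStep V E j r)^[t] A0

/-- The process on the complete `k`-uniform hypergraph on `V`. -/
noncomputable def compProc (V : Finset ℕ) (k j r : ℕ)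
    (A0 : Finset (Finset ℕ)) (t : ℕ) : Finset (Finset ℕ) :=
  bootProc V (V.powersetCard k) j r A0 t

/-- `A0` is contagious: eventually all `j`-sets of `V` are infected. -/
def Percolates (V : Finset ℕ) (k j r : ℕ) (A0 : Finset (Finset ℕ)) : Prop :=
  ∃ t, compProc V k j r A0 t = V.powersetCard j

/-- `ℓ_n(k,j,r)`: minimum size of a contagious `j`-configuration in `K_n^k`. -/
noncomputable def ellMin (n k j r : ℕ) : ℕ :=
  sInf {m | ∃ A0 : Finset (Finset ℕ), A0 ⊆ (range n).powersetCard j ∧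
    A0.card = m ∧ Percolates (range n) k j r A0}

open Classical in
/-- The extension set of a `(k-1)`-set `J` with respect to configuration `C` in the
complete `k`-uniform hypergraph on `V`. -/
noncomputable def extSet (V : Finset ℕ) (k : ℕ) (C : Finset (Finset ℕ))
    (J : Finset ℕ) : Finset ℕ :=
  V.filter (fun v => ∃ J' ∈ C, J' ≠ J ∧ J' ⊆ insert v J ∧ insert v J ∈ V.powersetCard k)

lemma mem_bootStep {V : Finset ℕ} {E : Finset (Finset ℕ)} {j r : ℕ}
    {A : Finset (Finset ℕ)} {J : Finset ℕ} :
    J ∈ bootStep V E j r A ↔ J ∈ A ∨ (J ∈ V.powersetCard j ∧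
      ∃ K : Fin r → Finset ℕ, ∃ Js : Fin r → Finset ℕ,
      Function.Injective K ∧ Function.Injective Js ∧
      ∀ i : Fin r, K i ∈ E ∧ Js i ∈ A ∧ Js i ∪ J ⊆ K i) := by
  classical
  simp [bootStep, mem_union, mem_filter]

lemma subset_bootProc (V : Finset ℕ) (E : Finset (Finset ℕ)) (j r : ℕ)
    (A0 : Finset (Finset ℕ)) (t : ℕ) : A0 ⊆ bootProc V E j r A0 t := by
  induction t with
  | zero => simp [bootProc]
  | succ t ih =>
      have : bootProc V E j r A0 (t + 1) = bootStep V E j r (bootProc V E j r A0 t) := by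
        simp [bootProc, Function.iterate_succ_apply']
      rw [this]
      exact ih.trans subset_union_left

lemma stepLemma (n k r s : ℕ) (hk : 2 ≤ k) (hsr : s ≤ r)
    (S : Finset ℕ) (hS : S ⊆ range n) (hScard : S.card = s)
    (A : Finset (Finset ℕ))
    (hjoker : ∀ w ∈ S, ∀ J ∈ (range n).powersetCard (k - 1), w ∈ J → J ∈ A) :
    bootStep (range n \ S) ((range n \ S).powersetCard k) (k - 1) (r - s)
        (A.filter (fun J => Disjoint J S))
      = (bootStep (range n) ((range n).powersetCard k) (k - 1) r A).filter
        (fun J => Disjoint J S) := by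
  classical
  ext J
  rw [mem_filter, mem_bootStep, mem_bootStep, mem_filter]
  constructor
  · rintro (⟨hJA, hdis⟩ | ⟨hJmem, K, Js, hKinj, hJsinj, hprop⟩)
    · exact ⟨Or.inl hJA, hdis⟩
    · obtain ⟨hJsub, hJcard⟩ := mem_powersetCard.mp hJmem
      have hdis : Disjoint J S := by
        refine disjoint_left.mpr fun a ha haS => ?_
        exact (mem_sdiff.mp (hJsub ha)).2 haS
      have hJV : J ⊆ range n := hJsub.trans sdiff_subset
      have hJne : J.Nonempty := card_pos.mp (by omega)
      obtain ⟨x, hx⟩ := hJne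
      have hSnJ : ∀ w ∈ S, w ∉ J := fun w hw hwJ => disjoint_left.mp hdis hwJ hw
      set e := S.orderEmbOfFin hScard with he
      -- extended families
      set K' : Fin r → Finset ℕ := fun i =>
        if h : (i : ℕ) < r - s then K ⟨i, h⟩
        else insert (e ⟨(i : ℕ) - (r - s), by have := i.isLt; omega⟩) J with hK'
      set Js' : Fin r → Finset ℕ := fun i =>
        if h : (i : ℕ) < r - s then Js ⟨i, h⟩
        else insert (e ⟨(i : ℕ) - (r - s), by have := i.isLt; omega⟩) (J.erase x) with hJs'
      have heS : ∀ m, e m ∈ S := fun m => S.orderEmbOfFin_mem hScard m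
      have hKsub : ∀ i : Fin (r - s), K i ⊆ range n \ S := fun i =>
        (mem_powersetCard.mp (hprop i).1).1
      have hJsdis : ∀ i : Fin (r - s), Disjoint (Js i) S := fun i =>
        (mem_filter.mp (hprop i).2.1).2
      refine ⟨Or.inr ⟨mem_powersetCard.mpr ⟨hJV, hJcard⟩, K', Js', ?_, ?_, ?_⟩, hdis⟩
      · -- K' injective
        intro a b hab
        simp only [hK'] at hab
        split_ifs at hab with h1 h2 h2
        · have := hKinj hab
          exact Fin.ext (by simpa using congrArg Fin.val this)
        · exfalso
          have hw : e ⟨(b : ℕ) - (r - s), by have := b.isLt; omega⟩ ∈ K ⟨a, h1⟩ := by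
            rw [hab]; exact mem_insert_self _ _
          exact (mem_sdiff.mp (hKsub _ hw)).2 (heS _)
        · exfalso
          have hw : e ⟨(a : ℕ) - (r - s), by have := a.isLt; omega⟩ ∈ K ⟨b, h2⟩ := by
            rw [← hab]; exact mem_insert_self _ _
          exact (mem_sdiff.mp (hKsub _ hw)).2 (heS _)
        · have hwa : e ⟨(a : ℕ) - (r - s), by have := a.isLt; omega⟩ ∉ J :=
            hSnJ _ (heS _)
          have : e ⟨(a : ℕ) - (r - s), by have := a.isLt; omega⟩
              = e ⟨(b : ℕ) - (r - s), by have := b.isLt; omega⟩ := by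
            have hmem : e ⟨(a : ℕ) - (r - s), by have := a.isLt; omega⟩
                ∈ insert (e ⟨(b : ℕ) - (r - s), by have := b.isLt; omega⟩) J := by
              rw [← hab]; exact mem_insert_self _ _
            rcases mem_insert.mp hmem with h | h
            · exact h
            · exact absurd h hwa
          have := e.injective this
          have := congrArg Fin.val this
          simp only [Fin.val_mk] at this
          exact Fin.ext (by omega)
      · -- Js' injective
        intro a b hab
        simp only [hJs'] at hab
        split_ifs at hab with h1 h2 h2
        · have := hJsinj hab
          exact Fin.ext (by simpa using congrArg Fin.val this)
        · exfalso
          have hw : e ⟨(b : ℕ) - (r - s), by have := b.isLt; omega⟩ ∈ Js ⟨a, h1⟩ := by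
            rw [hab]; exact mem_insert_self _ _
          exact disjoint_left.mp (hJsdis _) hw (heS _)
        · exfalso
          have hw : e ⟨(a : ℕ) - (r - s), by have := a.isLt; omega⟩ ∈ Js ⟨b, h2⟩ := by
            rw [← hab]; exact mem_insert_self _ _
          exact disjoint_left.mp (hJsdis _) hw (heS _)
        · have hwa : e ⟨(a : ℕ) - (r - s), by have := a.isLt; omega⟩ ∉ J.erase x :=
            fun h => hSnJ _ (heS _) (mem_of_mem_erase h)
          have : e ⟨(a : ℕ) - (r - s), by have := a.isLt; omega⟩
              = e ⟨(b : ℕ) - (r - s), by have := b.isLt; omega⟩ := by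
            have hmem : e ⟨(a : ℕ) - (r - s), by have := a.isLt; omega⟩
                ∈ insert (e ⟨(b : ℕ) - (r - s), by have := b.isLt; omega⟩) (J.erase x) := by
              rw [← hab]; exact mem_insert_self _ _
            rcases mem_insert.mp hmem with h | h
            · exact h
            · exact absurd h hwa
          have := e.injective this
          have := congrArg Fin.val this
          simp only [Fin.val_mk] at this
          exact Fin.ext (by omega)
      · -- properties
        intro i
        simp only [hK', hJs']
        split_ifs with h
        · obtain ⟨hK1, hK2, hK3⟩ := hprop ⟨i, h⟩
          refine ⟨?_, (mem_filter.mp hK2).1, hK3⟩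
          obtain ⟨hs1, hs2⟩ := mem_powersetCard.mp hK1
          exact mem_powersetCard.mpr ⟨hs1.trans sdiff_subset, hs2⟩
        · set w := e ⟨(i : ℕ) - (r - s), by have := i.isLt; omega⟩ with hwdef
          have hwS : w ∈ S := heS _
          have hwJ : w ∉ J := hSnJ _ hwS
          refine ⟨?_, ?_, ?_⟩
          · refine mem_powersetCard.mpr ⟨insert_subset (hS hwS) hJV, ?_⟩
            rw [card_insert_of_notMem hwJ, hJcard]
            omega
          · refine hjoker w hwS _ ?_ (mem_insert_self _ _)
            refine mem_powersetCard.mpr ⟨insert_subset (hS hwS)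
              ((erase_subset _ _).trans hJV), ?_⟩
            have hwJe : w ∉ J.erase x := fun h => hwJ (mem_of_mem_erase h)
            rw [card_insert_of_notMem hwJe, card_erase_of_mem hx, hJcard]
            omega
          · exact union_subset (insert_subset_insert _ (erase_subset _ _)) (subset_insert _ _)
  · rintro ⟨hJA | ⟨hJmem, K, Js, hKinj, hJsinj, hprop⟩, hdis⟩
    · exact Or.inl ⟨hJA, hdis⟩
    · obtain ⟨hJsub, hJcard⟩ := mem_powersetCard.mp hJmem
      have hJsub' : J ⊆ range n \ S := fun a ha =>
        mem_sdiff.mpr ⟨hJsub ha, disjoint_left.mp hdis ha⟩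
      have hJK : ∀ i, J ⊆ K i := fun i => (union_subset_iff.mp (hprop i).2.2).2
      have hKcard : ∀ i, (K i).card = k := fun i => (mem_powersetCard.mp (hprop i).1).2
      have hKV : ∀ i, K i ⊆ range n := fun i => (mem_powersetCard.mp (hprop i).1).1
      have hcard1 : ∀ i, (K i \ J).card = 1 := by
        intro i
        rw [card_sdiff_of_subset (hJK i), hKcard, hJcard]
        omega
      have hne : ∀ i, (K i \ J).Nonempty := fun i => card_pos.mp (by rw [hcard1]; omega)
      set v : Fin r → ℕ := fun i => (K i \ J).min' (hne i) with hv
      have hveq : ∀ i, K i \ J = {v i} := by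
        intro i
        obtain ⟨a, ha⟩ := card_eq_one.mp (hcard1 i)
        rw [ha]
        congr 1
        have : v i ∈ K i \ J := min'_mem _ _
        rw [ha, mem_singleton] at this
        exact this.symm
      have hKeq : ∀ i, K i = insert (v i) J := by
        intro i
        rw [← sdiff_union_of_subset (hJK i), hveq i, insert_eq]
      have hvnJ : ∀ i, v i ∉ J := fun i => (mem_sdiff.mp (min'_mem _ (hne i))).2
      have hvinj : Function.Injective v := by
        intro a b hab
        apply hKinj
        rw [hKeq a, hKeq b, hab]
      have hbad : ((univ : Finset (Fin r)).filter (fun i => v i ∈ S)).card ≤ s := by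
        rw [← hScard]
        apply card_le_card_of_injOn v
        · intro a ha; exact (mem_filter.mp ha).2
        · exact hvinj.injOn
      have hgood : r - s ≤ ((univ : Finset (Fin r)).filter (fun i => v i ∉ S)).card := by
        have := card_filter_add_card_filter_not
          (s := (univ : Finset (Fin r))) (p := fun i => v i ∈ S)
        simp only [card_univ, Fintype.card_fin] at this
        omega
      obtain ⟨G, hGsub, hGcard⟩ := exists_subset_card_eq hgood
      set emb := G.orderEmbOfFin hGcard with hemb
      have hembG : ∀ i, emb i ∈ G := fun i => G.orderEmbOfFin_mem hGcard i
      have hvS : ∀ i, v (emb i) ∉ S := fun i => (mem_filter.mp (hGsub (hembG i))).2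
      have hKsub' : ∀ i : Fin (r - s), K (emb i) ⊆ range n \ S := by
        intro i
        rw [hKeq]
        refine insert_subset ?_ hJsub'
        refine mem_sdiff.mpr ⟨hKV (emb i) ?_, hvS i⟩
        rw [hKeq]; exact mem_insert_self _ _
      refine Or.inr ⟨mem_powersetCard.mpr ⟨hJsub', hJcard⟩,
        fun i => K (emb i), fun i => Js (emb i),
        hKinj.comp emb.injective, hJsinj.comp emb.injective, ?_⟩
      intro i
      refine ⟨mem_powersetCard.mpr ⟨hKsub' i, hKcard _⟩, ?_, (hprop (emb i)).2.2⟩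
      refine mem_filter.mpr ⟨(hprop (emb i)).2.1, ?_⟩
      have hJsK : Js (emb i) ⊆ K (emb i) := (union_subset_iff.mp (hprop (emb i)).2.2).1
      exact disjoint_left.mpr fun a ha haS =>
        (mem_sdiff.mp (hKsub' i (hJsK ha))).2 haS

theorem stmt3 (n k r s : ℕ) (hk : 2 ≤ k) (hs : 1 ≤ s) (hsr : s ≤ r)
    (hn : k + r - 1 ≤ n)
    (S : Finset ℕ) (hS : S ⊆ range n) (hScard : S.card = s)
    (B0 : Finset (Finset ℕ)) (hB0 : B0 ⊆ (range n).powersetCard (k - 1))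
    (hjoker : ∀ v ∈ S, ∀ J ∈ (range n).powersetCard (k - 1), v ∈ J → J ∈ B0) :
    ∀ t, compProc (range n \ S) k (k - 1) (r - s) (B0.filter (fun J => Disjoint J S)) t =
      (compProc (range n) k (k - 1) r B0 t).filter (fun J => Disjoint J S) := by
  classical
  intro t
  induction t with
  | zero => simp [compProc, bootProc]
  | succ t ih =>
      have hB0t : B0 ⊆ compProc (range n) k (k - 1) r B0 t :=
        subset_bootProc _ _ _ _ _ _
      have hstep1 : compProc (range n \ S) k (k - 1) (r - s)
            (B0.filter (fun J => Disjoint J S)) (t + 1)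
          = bootStep (range n \ S) ((range n \ S).powersetCard k) (k - 1) (r - s)
            (compProc (range n \ S) k (k - 1) (r - s)
              (B0.filter (fun J => Disjoint J S)) t) := by
        simp [compProc, bootProc, Function.iterate_succ_apply']
      have hstep2 : compProc (range n) k (k - 1) r B0 (t + 1)
          = bootStep (range n) ((range n).powersetCard k) (k - 1) r
            (compProc (range n) k (k - 1) r B0 t) := by
        simp [compProc, bootProc, Function.iterate_succ_apply']
      rw [hstep1, ih, hstep2]
      exact stepLemma n k r s hk hsr S hS hScard _
        (fun w hw J hJ hwJ => hB0t (hjoker w hw J hJ hwJ))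
end

section
/- Let h < m < j ≤ k−2 and j + m − h ≤ k−1, and let M_1, M_2 be m-sets of [n] with |M_1 ∩ M_2| = h. If every j-set containing M_1 is infected at time t (M_1* ⊆ A_t) in the (r, A_0)-process on K_n^k with n sufficiently large, then every j-set containing M_2 is infected at time t+1 (M_2* ⊆ A_{t+1}). -/
open Finset

theorem stmt5 (n k j r m h t : ℕ) (hhm : h < m) (hmj : m < j) (hjk : j ≤ k - 2)
    (hsum : j + m - h ≤ k - 1) (hr : 1 ≤ r) (hn : k + r ≤ n)
    (M1 M2 : Finset ℕ) (hM1 : M1 ⊆ range n) (hM2 : M2 ⊆ range n)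
    (hM1c : M1.card = m) (hM2c : M2.card = m) (hint : (M1 ∩ M2).card = h)
    (A0 : Finset (Finset ℕ)) (hA0 : A0 ⊆ (range n).powersetCard j)
    (hjoker : ∀ J ∈ (range n).powersetCard j, M1 ⊆ J → J ∈ compProc (range n) k j r A0 t) :
    ∀ J ∈ (range n).powersetCard j, M2 ⊆ J → J ∈ compProc (range n) k j r A0 (t + 1) := by
  intro J hJ hM2J
  have hJ' := hJ
  rw [mem_powersetCard] at hJ'
  obtain ⟨hJn, hJc⟩ := hJ'
  have hk4 : 4 ≤ k := by omega
  set U := M1 ∪ J with hU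
  have hUn : U ⊆ range n := union_subset hM1 hJn
  have hcap : h ≤ (M1 ∩ J).card := by
    rw [← hint]; exact card_le_card (inter_subset_inter Subset.rfl hM2J)
  have hUiU : U.card + (M1 ∩ J).card = m + j := by
    rw [hU, card_union_add_card_inter, hM1c, hJc]
  have hUcard : U.card ≤ k - 1 := by omega
  -- choose T ⊆ J \ M1 of size j - 1 - m
  have hJM1 : (J \ M1).card + (J ∩ M1).card = j := by
    rw [card_sdiff_add_card_inter, hJc]
  have hJM1' : (J ∩ M1).card ≤ m := by
    rw [← hM1c]; exact card_le_card inter_subset_right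
  obtain ⟨T, hTsub, hTcard⟩ := exists_subset_card_eq (show j - 1 - m ≤ (J \ M1).card by omega)
  set C := M1 ∪ T with hC
  have hTM1 : Disjoint M1 T := by
    refine disjoint_left.2 fun a ha hb => ?_
    exact (mem_sdiff.1 (hTsub hb)).2 ha
  have hCcard : C.card = j - 1 := by
    rw [card_union_of_disjoint hTM1, hM1c, hTcard]; omega
  have hCU : C ⊆ U := union_subset subset_union_left
    ((hTsub.trans sdiff_subset).trans subset_union_right)
  -- extra vertices
  set W := range n \ U with hW
  have hWcard : W.card = n - U.card := by
    rw [card_sdiff_of_subset hUn, card_range]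
  obtain ⟨X, hXsub, hXcard⟩ := exists_subset_card_eq (show r ≤ W.card by omega)
  obtain ⟨F, hFsub, hFcard⟩ :=
    exists_subset_card_eq (show k - 1 - U.card ≤ (W \ X).card by
      rw [card_sdiff_of_subset hXsub, hWcard, hXcard]; omega)
  set x : Fin r → ℕ := fun i => (X.orderIsoOfFin hXcard i : ℕ) with hx
  have hxinj : Function.Injective x := fun i i' hii => by
    exact (X.orderIsoOfFin hXcard).injective (Subtype.coe_injective hii)
  have hxX : ∀ i, x i ∈ X := fun i => (X.orderIsoOfFin hXcard i).2
  have hxU : ∀ i, x i ∉ U := fun i => (mem_sdiff.1 (hXsub (hxX i))).2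
  have hxn : ∀ i, x i ∈ range n := fun i => (mem_sdiff.1 (hXsub (hxX i))).1
  have hxF : ∀ i, x i ∉ F := fun i hi => (mem_sdiff.1 (hFsub hi)).2 (hxX i)
  have hFU : Disjoint U F := by
    refine disjoint_left.2 fun a ha hb => ?_
    exact (mem_sdiff.1 ((hFsub.trans sdiff_subset) hb)).2 ha
  have hFn : F ⊆ range n := (hFsub.trans sdiff_subset).trans sdiff_subset
  -- the witnessing sets
  have hxUF : ∀ i, x i ∉ U ∪ F := fun i hi => by
    rcases mem_union.1 hi with h' | h'
    · exact hxU i h'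
    · exact hxF i h'
  have hxC : ∀ i, x i ∉ C := fun i hi => hxU i (hCU hi)
  have hKinj : Function.Injective (fun i => insert (x i) (U ∪ F)) := fun i i' hii => by
    simp only at hii
    apply hxinj
    have : x i ∈ insert (x i') (U ∪ F) := hii ▸ mem_insert_self _ _
    rcases mem_insert.1 this with h' | h'
    · exact h'
    · exact absurd h' (hxUF i)
  have hJssinj : Function.Injective (fun i => insert (x i) C) := fun i i' hii => by
    simp only at hii
    apply hxinj
    have : x i ∈ insert (x i') C := hii ▸ mem_insert_self _ _
    rcases mem_insert.1 this with h' | h'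
    · exact h'
    · exact absurd h' (hxC i)
  -- membership facts
  have hJssmem : ∀ i, insert (x i) C ∈ (range n).powersetCard j := by
    intro i
    rw [mem_powersetCard]
    constructor
    · exact insert_subset (hxn i) (hCU.trans hUn)
    · rw [card_insert_of_notMem (hxC i), hCcard]; omega
  have hJssA : ∀ i, insert (x i) C ∈ compProc (range n) k j r A0 t := by
    intro i
    exact hjoker _ (hJssmem i) (subset_union_left.trans (subset_insert _ _))
  have hKmem : ∀ i, insert (x i) (U ∪ F) ∈ (range n).powersetCard k := by
    intro i
    rw [mem_powersetCard]
    constructor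
    · exact insert_subset (hxn i) (union_subset hUn hFn)
    · rw [card_insert_of_notMem (hxUF i), card_union_of_disjoint hFU, hFcard]; omega
  have hsubK : ∀ i, insert (x i) C ∪ J ⊆ insert (x i) (U ∪ F) := by
    intro i a ha
    rcases mem_union.1 ha with h' | h'
    · rcases mem_insert.1 h' with h'' | h''
      · exact h'' ▸ mem_insert_self _ _
      · exact mem_insert_of_mem (mem_union_left _ (hCU h''))
    · exact mem_insert_of_mem (mem_union_left _ (mem_union_right _ h'))
  -- conclude
  show J ∈ compProc (range n) k j r A0 (t + 1)
  rw [compProc, bootProc, Function.iterate_succ_apply']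
  classical
  rw [bootStep, mem_union]
  right
  rw [mem_filter]
  exact ⟨hJ, fun i => insert (x i) (U ∪ F), fun i => insert (x i) C,
    hKinj, hJssinj, fun i => ⟨hKmem i, hJssA i, hsubK i⟩⟩
end

section
/- Suppose m < j ≤ k−2 and let M be an m-set of [n]. If M* ⊆ A_t in the (r, A_0)-process on K_n^k (n sufficiently large), then the process fully percolates within m further steps: A_{t+m} = C([n], j), the set of all j-sets. -/
open Finset

lemma bootStep_subset_pow (V : Finset ℕ) (E : Finset (Finset ℕ)) (j r : ℕ)
    (A : Finset (Finset ℕ)) (h : A ⊆ V.powersetCard j) :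
    bootStep V E j r A ⊆ V.powersetCard j := by
  classical
  intro x hx
  rcases mem_union.mp hx with hx | hx
  · exact h hx
  · exact (mem_filter.mp hx).1

lemma step_lemma (n k j r s : ℕ) (hjk : j + 2 ≤ k) (hn : k + r + 1 ≤ n)
    (S : Finset ℕ) (hS : S ⊆ range n) (hcard : S.card = s) (hs1 : 1 ≤ s) (hsj : s < j)
    (v : ℕ) (hv : v ∈ S)
    (A : Finset (Finset ℕ))
    (hA : ∀ J ∈ (range n).powersetCard j, S ⊆ J → J ∈ A) :
    ∀ J ∈ (range n).powersetCard j, S.erase v ⊆ J →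
      J ∈ bootStep (range n) ((range n).powersetCard k) j r A := by
  classical
  intro J hJ hSJ
  obtain ⟨hJsub, hJcard⟩ := mem_powersetCard.mp hJ
  by_cases hvJ : v ∈ J
  · have hSsubJ : S ⊆ J := by
      intro x hx
      by_cases hxv : x = v
      · subst hxv; exact hvJ
      · exact hSJ (mem_erase.mpr ⟨hxv, hx⟩)
    exact mem_union_left _ (hA J hJ hSsubJ)
  · -- v ∉ J : build witnesses
    set T : Finset ℕ := range n \ insert v J with hT
    have hvrange : v ∈ range n := hS hv
    have hins : insert v J ⊆ range n := insert_subset hvrange hJsub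
    have hinscard : (insert v J).card = j + 1 := by
      rw [card_insert_of_notMem hvJ, hJcard]
    have hTcard : T.card = n - (j + 1) := by
      rw [hT, card_sdiff_of_subset hins, hinscard, card_range]
    have hFex : r + (k - j - 2) ≤ T.card := by omega
    obtain ⟨F, hFT, hFcard⟩ := exists_subset_card_eq hFex
    obtain ⟨W, hWF, hWcard⟩ := exists_subset_card_eq
      (show k - j - 2 ≤ F.card by omega)
    have hFWcard : (F \ W).card = r := by
      rw [card_sdiff_of_subset hWF, hFcard, hWcard]; omega
    let e := (F \ W).orderIsoOfFin hFWcard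
    set w : Fin r → ℕ := fun i => (e i : ℕ) with hw
    have hwinj : Function.Injective w := by
      intro a b hab
      exact e.injective (Subtype.ext hab)
    have hwmem : ∀ i, w i ∈ F \ W := fun i => (e i).2
    have hwT : ∀ i, w i ∈ T := fun i => hFT (mem_sdiff.mp (hwmem i)).1
    have hwprop : ∀ i, w i ∈ range n ∧ w i ≠ v ∧ w i ∉ J ∧ w i ∉ W := by
      intro i
      have h1 := mem_sdiff.mp (hwT i)
      have h2 := h1.2
      simp only [mem_insert, not_or] at h2
      exact ⟨h1.1, h2.1, h2.2, (mem_sdiff.mp (hwmem i)).2⟩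
    have hWT : W ⊆ T := hWF.trans hFT
    have hWrange : W ⊆ range n := fun x hx => (mem_sdiff.mp (hWT hx)).1
    have hWdisj : Disjoint J W := by
      rw [disjoint_left]
      intro x hxJ hxW
      have := (mem_sdiff.mp (hWT hxW)).2
      exact this (mem_insert_of_mem hxJ)
    have hvW : v ∉ W := fun hvw => (mem_sdiff.mp (hWT hvw)).2 (mem_insert_self v J)
    -- two elements of J avoiding S.erase v
    have hScard' : (S.erase v).card = s - 1 := by rw [card_erase_of_mem hv, hcard]
    have hPex : 2 ≤ (J \ S.erase v).card := by
      rw [card_sdiff_of_subset hSJ, hJcard, hScard']; omega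
    obtain ⟨P, hPJS, hPcard⟩ := exists_subset_card_eq hPex
    have hPJ : P ⊆ J := hPJS.trans (sdiff_subset)
    set Js : Fin r → Finset ℕ := fun i => insert v (insert (w i) (J \ P)) with hJs
    set K : Fin r → Finset ℕ := fun i => insert v (insert (w i) (J ∪ W)) with hK
    have hwJP : ∀ i, w i ∉ J \ P := fun i h => (hwprop i).2.2.1 (mem_sdiff.mp h).1
    have hvJP : ∀ i, v ∉ insert (w i) (J \ P) := by
      intro i h
      rcases mem_insert.mp h with h | h
      · exact (hwprop i).2.1 h.symm
      · exact hvJ (mem_sdiff.mp h).1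
    have hJscard : ∀ i, (Js i).card = j := by
      intro i
      rw [hJs]
      rw [card_insert_of_notMem (hvJP i), card_insert_of_notMem (hwJP i),
        card_sdiff_of_subset hPJ, hJcard, hPcard]
      omega
    have hJssub : ∀ i, Js i ⊆ range n := by
      intro i
      rw [hJs]
      exact insert_subset hvrange (insert_subset (hwprop i).1
        ((sdiff_subset).trans hJsub))
    have hSJs : ∀ i, S ⊆ Js i := by
      intro i x hx
      by_cases hxv : x = v
      · subst hxv; exact mem_insert_self _ _
      · have hxe : x ∈ S.erase v := mem_erase.mpr ⟨hxv, hx⟩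
        have hxJ : x ∈ J := hSJ hxe
        have hxP : x ∉ P := fun hxP => (mem_sdiff.mp (hPJS hxP)).2 hxe
        exact mem_insert_of_mem (mem_insert_of_mem (mem_sdiff.mpr ⟨hxJ, hxP⟩))
    have hJsA : ∀ i, Js i ∈ A := by
      intro i
      exact hA _ (mem_powersetCard.mpr ⟨hJssub i, hJscard i⟩) (hSJs i)
    have hwJW : ∀ i, w i ∉ J ∪ W := by
      intro i h
      rcases mem_union.mp h with h | h
      · exact (hwprop i).2.2.1 h
      · exact (hwprop i).2.2.2 h
    have hvJW : ∀ i, v ∉ insert (w i) (J ∪ W) := by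
      intro i h
      rcases mem_insert.mp h with h | h
      · exact (hwprop i).2.1 h.symm
      · rcases mem_union.mp h with h | h
        · exact hvJ h
        · exact hvW h
    have hKcard : ∀ i, (K i).card = k := by
      intro i
      rw [hK, card_insert_of_notMem (hvJW i), card_insert_of_notMem (hwJW i),
        card_union_of_disjoint hWdisj, hJcard, hWcard]
      omega
    have hKsub : ∀ i, K i ⊆ range n := by
      intro i
      exact insert_subset hvrange (insert_subset (hwprop i).1
        (union_subset hJsub hWrange))
    have hKE : ∀ i, K i ∈ (range n).powersetCard k := by
      intro i; exact mem_powersetCard.mpr ⟨hKsub i, hKcard i⟩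
    have hKinj : Function.Injective K := by
      intro a b hab
      apply hwinj
      have hma : w a ∈ K b := by
        rw [← hab, hK]
        exact mem_insert_of_mem (mem_insert_self _ _)
      rw [hK] at hma
      rcases mem_insert.mp hma with h | h
      · exact absurd h (hwprop a).2.1
      · rcases mem_insert.mp h with h | h
        · exact h
        · exact absurd h (hwJW a)
    have hJsinj : Function.Injective Js := by
      intro a b hab
      apply hwinj
      have hma : w a ∈ Js b := by
        rw [← hab, hJs]
        exact mem_insert_of_mem (mem_insert_self _ _)
      rw [hJs] at hma
      rcases mem_insert.mp hma with h | h
      · exact absurd h (hwprop a).2.1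
      · rcases mem_insert.mp h with h | h
        · exact h
        · exact absurd h (hwJP a)
    have hJsK : ∀ i, Js i ∪ J ⊆ K i := by
      intro i
      apply union_subset
      · rw [hJs, hK]
        exact insert_subset_insert _ (insert_subset_insert _
          ((sdiff_subset).trans subset_union_left))
      · rw [hK]
        intro x hx
        exact mem_insert_of_mem (mem_insert_of_mem (mem_union_left _ hx))
    apply mem_union_right
    rw [mem_filter]
    exact ⟨hJ, K, Js, hKinj, hJsinj, fun i => ⟨hKE i, hJsA i, hJsK i⟩⟩

lemma main_lemma (n k j r : ℕ) (hjk : j + 2 ≤ k) (hn : k + r + 1 ≤ n) :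
    ∀ s, s < j → ∀ S ⊆ range n, S.card = s →
    ∀ A : Finset (Finset ℕ), (∀ J ∈ (range n).powersetCard j, S ⊆ J → J ∈ A) →
    ∀ J ∈ (range n).powersetCard j,
      J ∈ (bootStep (range n) ((range n).powersetCard k) j r)^[s] A := by
  intro s
  induction s with
  | zero =>
    intro _ S _ hcard A hA J hJ
    have hSe : S = ∅ := card_eq_zero.mp hcard
    exact hA J hJ (hSe ▸ empty_subset J)
  | succ s ih =>
    intro hsj S hS hcard A hA J hJ
    obtain ⟨v, hv⟩ : S.Nonempty := card_pos.mp (by omega)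
    rw [Function.iterate_succ_apply]
    refine ih (by omega) (S.erase v) ((erase_subset v S).trans hS)
      (by rw [card_erase_of_mem hv, hcard]; omega) _ ?_ J hJ
    exact step_lemma n k j r (s + 1) hjk hn S hS hcard (by omega) hsj v hv A hA

theorem stmt6 (k j r m : ℕ) (hmj : m < j) (hjk : j ≤ k - 2) (hr : 1 ≤ r) :
    ∃ n0, ∀ n ≥ n0, ∀ t : ℕ, ∀ M ⊆ range n, M.card = m →
      ∀ A0 ⊆ (range n).powersetCard j,
        (∀ J ∈ (range n).powersetCard j, M ⊆ J → J ∈ compProc (range n) k j r A0 t) →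
        compProc (range n) k j r A0 (t + m) = (range n).powersetCard j := by
  refine ⟨k + r + 1, fun n hn t M hM hMcard A0 hA0 hAll => ?_⟩
  have hjk2 : j + 2 ≤ k := by omega
  apply Finset.Subset.antisymm
  · have hmono : ∀ u, compProc (range n) k j r A0 u ⊆ (range n).powersetCard j := by
      intro u
      induction u with
      | zero => exact hA0
      | succ u ihu =>
        show bootProc _ _ _ _ _ _ ⊆ _
        rw [bootProc, Function.iterate_succ_apply']
        exact bootStep_subset_pow _ _ _ _ _ ihu
    exact hmono (t + m)
  · intro J hJ
    have h := main_lemma n k j r hjk2 hn m hmj M hM hMcard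
      (compProc (range n) k j r A0 t) hAll J hJ
    show J ∈ bootProc _ _ _ _ _ _
    rw [bootProc, add_comm t m, Function.iterate_add_apply]
    exact h
end

section
/- If 2j − k ≤ m < j ≤ k−2, then an (m,j)-star of size r percolates in K_n^k under the j-set bootstrap percolation process with infection threshold r, for n sufficiently large. Consequently, for j ≤ k−2 the minimum size of a contagious j-configuration equals r: ℓ_n(k,j,r) = r. -/
open Finset

/-- An (m,j)-star with centre M: distinct j-sets every two of which intersect
precisely in the common m-set M. -/
def IsStar (m j : ℕ) (M : Finset ℕ) (S : Finset (Finset ℕ)) : Prop :=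
  M.card = m ∧ (∀ J ∈ S, J.card = j ∧ M ⊆ J) ∧
  ∀ J1 ∈ S, ∀ J2 ∈ S, J1 ≠ J2 → J1 ∩ J2 = M

/-!
A star with centre `M` infects every `j`-set `J ⊇ M` in one step: a star member and `J` span at
most `2j - m ≤ k` vertices, and distinct members give distinct unions. The centre can then be
moved one vertex at a time. Once every `j`-set through an `m`-set `N` is infected, so is every
`j`-set `J` with `N ⊆ J ∪ {x}`: take `r` fresh vertices `w` and a `(j-1)`-set `B` with
`N ⊆ B ⊆ J ∪ {x}`; the infected sets `B ∪ {w}` reach `J` through `k`-sets containing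
`J ∪ {x, w}`, which exist as `j + 2 ≤ k`. Conversely, fewer than `r` infected sets never infect
anything, so no configuration smaller than a star percolates and `ℓ_n(k,j,r) = r`.
-/

section Padding

variable {α ι : Type*} [DecidableEq α] [Fintype ι]

/-- The padding `K i \ U i` avoids every `U i'`, so `U i = K i ∩ ⋃ U` can be read off `K i`. -/
lemma exists_injective_powersetCard_superset {V : Finset α} {k : ℕ} (U : ι → Finset α)
    (hU : Function.Injective U) (hUV : ∀ i, U i ⊆ V) (hUk : ∀ i, #(U i) ≤ k)
    (hV : (Fintype.card ι + 1) * k ≤ #V) :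
    ∃ K : ι → Finset α, Function.Injective K ∧ ∀ i, K i ∈ V.powersetCard k ∧ U i ⊆ K i := by
  set W := univ.biUnion U
  have hW : #W ≤ Fintype.card ι * k := card_biUnion_le_card_mul _ _ _ fun i _ => hUk i
  have hpool : ∀ i, k - #(U i) ≤ #(V \ W) := fun i => by
    have := le_card_sdiff W V
    rw [add_one_mul] at hV
    omega
  choose pad hpadW hpad using fun i => exists_subset_card_eq (hpool i)
  have hUW : ∀ i, U i ⊆ W := fun i => subset_biUnion_of_mem U (mem_univ i)
  have hdisj : ∀ i, Disjoint (U i) (pad i) := fun i =>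
    disjoint_of_subset_left (hUW i) (disjoint_of_subset_right (hpadW i) disjoint_sdiff)
  have hrecover : ∀ i, (U i ∪ pad i) ∩ W = U i := fun i => by
    rw [union_inter_distrib_right, inter_eq_left.2 (hUW i),
      disjoint_iff_inter_eq_empty.1 (disjoint_of_subset_left (hpadW i) sdiff_disjoint),
      union_empty]
  refine ⟨fun i => U i ∪ pad i, fun i i' h => hU ?_, fun i => ⟨mem_powersetCard.2 ⟨?_, ?_⟩,
    subset_union_left⟩⟩
  · rw [← hrecover i, ← hrecover i']
    exact congrArg (· ∩ W) h
  · exact union_subset (hUV i) ((hpadW i).trans sdiff_subset)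
  · rw [card_union_of_disjoint (hdisj i), hpad]
    have := hUk i
    omega

end Padding

def IsEventuallyInfected (V : Finset ℕ) (k j r : ℕ) (A0 : Finset (Finset ℕ)) (J : Finset ℕ) :
    Prop :=
  ∃ t, J ∈ compProc V k j r A0 t

section Dynamics

variable {V : Finset ℕ} {k j r : ℕ} {A0 : Finset (Finset ℕ)}

lemma compProc_succ (t : ℕ) :
    compProc V k j r A0 (t + 1) = bootStep V (V.powersetCard k) j r (compProc V k j r A0 t) :=
  Function.iterate_succ_apply' _ _ _

lemma compProc_monotone : Monotone (compProc V k j r A0) :=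
  monotone_nat_of_le_succ fun t => by rw [compProc_succ]; exact subset_union_left

lemma compProc_subset_powersetCard (hA0 : A0 ⊆ V.powersetCard j) (t : ℕ) :
    compProc V k j r A0 t ⊆ V.powersetCard j := by
  induction t with
  | zero => exact hA0
  | succ t ih =>
    rw [compProc_succ]
    classical exact union_subset ih (filter_subset _ _)

lemma bootStep_eq_self_of_card_lt {E A : Finset (Finset ℕ)} (hA : #A < r) :
    bootStep V E j r A = A := by
  classical
  refine union_eq_left.2 fun J hJ => absurd hA (not_lt.2 ?_)
  obtain ⟨-, K, Js, -, hJs, hmem⟩ := mem_filter.1 hJ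
  simpa using card_le_card_of_injOn (s := univ) Js (fun i _ => (hmem i).2.1) hJs.injOn

lemma compProc_eq_self_of_card_lt (hA0 : #A0 < r) (t : ℕ) : compProc V k j r A0 t = A0 := by
  induction t with
  | zero => rfl
  | succ t ih => rw [compProc_succ, ih, bootStep_eq_self_of_card_lt hA0]

lemma Percolates.eq_powersetCard_of_card_lt (h : Percolates V k j r A0) (hA0 : #A0 < r) :
    A0 = V.powersetCard j := by
  obtain ⟨t, ht⟩ := h
  rwa [compProc_eq_self_of_card_lt hA0] at ht

lemma IsEventuallyInfected.eventually {J : Finset ℕ} (h : IsEventuallyInfected V k j r A0 J) :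
    ∀ᶠ t in Filter.atTop, J ∈ compProc V k j r A0 t :=
  let ⟨t, ht⟩ := h
  Filter.eventually_atTop.2 ⟨t, fun _ hs => compProc_monotone hs ht⟩

lemma percolates_of_forall_isEventuallyInfected (hA0 : A0 ⊆ V.powersetCard j)
    (h : ∀ J ∈ V.powersetCard j, IsEventuallyInfected V k j r A0 J) : Percolates V k j r A0 :=
  let ⟨t, ht⟩ := ((Filter.eventually_all_finset _).2 fun J hJ => (h J hJ).eventually).exists
  ⟨t, (compProc_subset_powersetCard hA0 t).antisymm ht⟩

lemma IsEventuallyInfected.of_witnesses {J : Finset ℕ} (hJ : J ∈ V.powersetCard j)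
    (Js : Fin r → Finset ℕ) (hinf : ∀ i, IsEventuallyInfected V k j r A0 (Js i))
    (hJsV : ∀ i, Js i ⊆ V) (hcard : ∀ i, #(Js i ∪ J) ≤ k)
    (hinj : Function.Injective fun i => Js i ∪ J) (hV : (r + 1) * k ≤ #V) :
    IsEventuallyInfected V k j r A0 J := by
  obtain ⟨K, hKinj, hK⟩ := exists_injective_powersetCard_superset _ hinj
    (fun i => union_subset (hJsV i) (mem_powersetCard.1 hJ).1) hcard (by simpa using hV)
  obtain ⟨t, ht⟩ := (Filter.eventually_all.2 fun i => (hinf i).eventually).exists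
  refine ⟨t + 1, ?_⟩
  classical
  rw [compProc_succ]
  exact mem_union_right _ <| mem_filter.2 ⟨hJ, K, Js, hKinj,
    Function.Injective.of_comp (f := (· ∪ J)) hinj, fun i => ⟨(hK i).1, ht i, (hK i).2⟩⟩

lemma IsEventuallyInfected.of_forall_superset {N J : Finset ℕ} {x : ℕ}
    (hN : ∀ J' ∈ V.powersetCard j, N ⊆ J' → IsEventuallyInfected V k j r A0 J')
    (hNj : #N < j) (hJ : J ∈ V.powersetCard j) (hxV : x ∈ V) (hNJ : N ⊆ insert x J)
    (hjk : j + 2 ≤ k) (hV : j + 1 + r ≤ #V) (hVk : (r + 1) * k ≤ #V) :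
    IsEventuallyInfected V k j r A0 J := by
  obtain ⟨hJV, hJj⟩ := mem_powersetCard.1 hJ
  have hxJV : insert x J ⊆ V := insert_subset hxV hJV
  obtain ⟨B, hNB, hBJ, hB⟩ := exists_subsuperset_card_eq hNJ (Nat.le_sub_one_of_lt hNj)
    ((Nat.sub_le j 1).trans (hJj ▸ card_le_card (subset_insert x J)))
  have hfresh : Fintype.card (Fin r) ≤ Fintype.card (V \ insert x J : Finset ℕ) := by
    have := le_card_sdiff (insert x J) V
    have := card_insert_le x J
    simp only [Fintype.card_fin, Fintype.card_coe]
    omega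
  obtain ⟨e⟩ := Function.Embedding.nonempty_of_card_le hfresh
  set w : Fin r → ℕ := fun i => e i
  have hw : ∀ i, w i ∈ V ∧ w i ∉ insert x J := fun i => mem_sdiff.1 (e i).2
  have hwB : ∀ i, w i ∉ B := fun i h => (hw i).2 (hBJ h)
  have hwBV : ∀ i, insert (w i) B ⊆ V := fun i => insert_subset (hw i).1 (hBJ.trans hxJV)
  refine .of_witnesses hJ (fun i => insert (w i) B)
    (fun i => hN _ ?_ (hNB.trans (subset_insert _ _))) hwBV (fun i => ?_) (fun i i' h => ?_) hVk
  · rw [mem_powersetCard, card_insert_of_notMem (hwB i), hB]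
    exact ⟨hwBV i, by omega⟩
  · calc #(insert (w i) B ∪ J) ≤ #(insert (w i) (insert x J)) :=
          card_le_card <| by
            rw [insert_union]
            exact insert_subset_insert _ (union_subset hBJ (subset_insert x J))
      _ ≤ k := by
          have := card_insert_le (w i) (insert x J)
          have := card_insert_le x J
          omega
  · have hwi : w i ∈ insert (w i') B ∪ J := by
      simp only at h
      exact h ▸ mem_union_left _ (mem_insert_self _ _)
    simp only [mem_union, mem_insert, hwB, or_false] at hwi
    rcases hwi with hwi | hwi
    · exact e.injective (Subtype.ext hwi)
    · exact absurd (mem_insert_of_mem hwi) (hw i).2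

end Dynamics

section Star

variable {V : Finset ℕ} {k j r m : ℕ} {M : Finset ℕ} {S : Finset (Finset ℕ)}

lemma IsStar.eq_of_union_eq (hS : IsStar m j M S) {A B J : Finset ℕ} (hA : A ∈ S) (hB : B ∈ S)
    (hMJ : M ⊆ J) (hJ : #J = j) (h : A ∪ J = B ∪ J) : A = B := by
  by_contra hAB
  have hsdiff : A \ J = B \ J := by rw [← union_sdiff_right, h, union_sdiff_right]
  have hsub : ∀ {A B}, A ∈ S → B ∈ S → A ≠ B → A \ J = B \ J → A = J := by
    intro A B hA hB hAB hsdiff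
    refine eq_of_subset_of_card_le (fun x hxA => ?_) (hJ.trans (hS.2.1 A hA).1.symm).le
    by_contra hxJ
    have hxB : x ∈ B := (mem_sdiff.1 (hsdiff ▸ mem_sdiff.2 ⟨hxA, hxJ⟩)).1
    exact hxJ (hMJ (hS.2.2 A hA B hB hAB ▸ mem_inter.2 ⟨hxA, hxB⟩))
  exact hAB ((hsub hA hB hAB hsdiff).trans (hsub hB hA (Ne.symm hAB) hsdiff.symm).symm)

lemma IsStar.isEventuallyInfected_of_center_subset (hS : IsStar m j M S)
    (hSV : ∀ A ∈ S, A ⊆ V) (hSr : #S = r) (hk : 2 * j ≤ k + m) (hV : (r + 1) * k ≤ #V)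
    {J : Finset ℕ} (hJ : J ∈ V.powersetCard j) (hMJ : M ⊆ J) :
    IsEventuallyInfected V k j r S J := by
  set e := (S.equivFinOfCardEq hSr).symm
  refine .of_witnesses hJ (fun i => e i) (fun i => ⟨0, (e i).2⟩) (fun i => hSV _ (e i).2)
    (fun i => ?_) (fun i i' h => e.injective (Subtype.ext ?_)) hV
  · have := card_union_add_card_inter (e i : Finset ℕ) J
    have := card_le_card (subset_inter (hS.2.1 _ (e i).2).2 hMJ)
    have := (hS.2.1 _ (e i).2).1
    have := (mem_powersetCard.1 hJ).2
    have := hS.1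
    omega
  · exact hS.eq_of_union_eq (e i).2 (e i').2 hMJ (mem_powersetCard.1 hJ).2 h

lemma IsStar.isEventuallyInfected (hS : IsStar m j M S) (hSV : ∀ A ∈ S, A ⊆ V) (hSr : #S = r)
    (hr : 0 < r) (hk : 2 * j ≤ k + m) (hmj : m < j) (hjk : j + 2 ≤ k) (hV : j + 1 + r ≤ #V)
    (hVk : (r + 1) * k ≤ #V) {J : Finset ℕ} (hJ : J ∈ V.powersetCard j) :
    IsEventuallyInfected V k j r S J := by
  have hMV : M ⊆ V := by
    obtain ⟨A, hA⟩ := card_pos.1 (hSr ▸ hr)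
    exact (hS.2.1 A hA).2.trans (hSV A hA)
  suffices key : ∀ s M', #M' = m → #(M \ M') = s →
      ∀ J ∈ V.powersetCard j, M' ⊆ J → IsEventuallyInfected V k j r S J by
    obtain ⟨M', hM'J, hM'⟩ := exists_subset_card_eq (hmj.le.trans (mem_powersetCard.1 hJ).2.ge)
    exact key _ M' hM' rfl J hJ hM'J
  intro s
  induction s with
  | zero =>
    intro M' hM' hs J hJ hM'J
    have hMM' : M = M' :=
      eq_of_subset_of_card_le (sdiff_eq_empty_iff_subset.1 (card_eq_zero.1 hs)) (hM' ▸ hS.1.ge)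
    exact hS.isEventuallyInfected_of_center_subset hSV hSr hk hVk hJ (hMM' ▸ hM'J)
  | succ s ih =>
    intro M' hM' hs J hJ hM'J
    have hcomm := card_sdiff_comm (hS.1.trans hM'.symm)
    obtain ⟨x, hx⟩ := card_pos.1 (by omega : 0 < #(M \ M'))
    obtain ⟨y, hy⟩ := card_pos.1 (by omega : 0 < #(M' \ M))
    rw [mem_sdiff] at hx hy
    have hxM' : x ∉ M'.erase y := fun h => hx.2 (mem_of_mem_erase h)
    have hm : 0 < m := hM' ▸ card_pos.2 ⟨y, hy.1⟩
    have hcard : #(insert x (M'.erase y)) = m := by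
      rw [card_insert_of_notMem hxM', card_erase_of_mem hy.1]
      omega
    have hsdiff : M \ insert x (M'.erase y) = (M \ M').erase x := by
      ext z
      simp only [mem_sdiff, mem_insert, mem_erase]
      constructor
      · rintro ⟨hzM, hz⟩
        exact ⟨fun h => hz (Or.inl h), hzM, fun h => hz (Or.inr ⟨fun hzy => hy.2 (hzy ▸ hzM), h⟩)⟩
      · rintro ⟨hzx, hzM, hzM'⟩
        exact ⟨hzM, fun h => h.elim hzx fun h => hzM' h.2⟩
    refine .of_forall_superset (fun J' hJ' hNJ' => ih _ hcard ?_ J' hJ' hNJ') (hcard ▸ hmj) hJ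
      (hMV hx.1) (insert_subset_insert x ((erase_subset y M').trans hM'J)) hjk hV hVk
    rw [hsdiff, card_erase_of_mem (mem_sdiff.2 hx), hs, Nat.add_sub_cancel]

lemma IsStar.percolates (hS : IsStar m j M S) (hSV : ∀ A ∈ S, A ⊆ V) (hSr : #S = r) (hr : 0 < r)
    (hk : 2 * j ≤ k + m) (hmj : m < j) (hjk : j + 2 ≤ k) (hV : j + 1 + r ≤ #V)
    (hVk : (r + 1) * k ≤ #V) : Percolates V k j r S :=
  percolates_of_forall_isEventuallyInfected
    (fun A hA => mem_powersetCard.2 ⟨hSV A hA, (hS.2.1 A hA).1⟩)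
    fun _ hJ => hS.isEventuallyInfected hSV hSr hr hk hmj hjk hV hVk hJ

end Star

lemma exists_isStar_range {n j r m : ℕ} (hmj : m < j) (hn : m + r * (j - m) ≤ n) :
    ∃ S : Finset (Finset ℕ), (∀ A ∈ S, A ⊆ range n) ∧ IsStar m j (range m) S ∧ #S = r := by
  set d := j - m
  set A : ℕ → Finset ℕ := fun i => range m ∪ Ico (m + i * d) (m + (i + 1) * d)
  have hblock : ∀ {i i'}, i < i' → (i + 1) * d ≤ i' * d := fun h => Nat.mul_le_mul_right d h
  have hcard : ∀ i, #(A i) = j := fun i => by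
    rw [card_union_of_disjoint (disjoint_left.2 fun x hx hx' => by
      simp only [mem_range, mem_Ico] at hx hx'; omega), card_range, Nat.card_Ico, add_one_mul]
    omega
  have hinter : ∀ i i', i ≠ i' → A i ∩ A i' = range m := fun i i' hii' => by
    ext x
    simp only [A, mem_inter, mem_union, mem_range, mem_Ico]
    rcases hii'.lt_or_gt with h | h <;> have := hblock h <;> omega
  have hinj : Set.InjOn A (range r) := fun i _ i' _ h => by
    by_contra hii'
    have := hcard i
    rw [← inter_self (A i), congrArg (A i ∩ ·) h, hinter i i' hii', card_range] at this
    omega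
  refine ⟨(range r).image A, ?_, ⟨card_range m, ?_, ?_⟩, card_image_of_injOn hinj |>.trans
    (card_range r)⟩
  · simp only [mem_image, mem_range]
    rintro _ ⟨i, hi, rfl⟩ x hx
    have := hblock hi
    simp only [A, mem_union, mem_range, mem_Ico] at hx ⊢
    omega
  · simp only [mem_image]
    rintro _ ⟨i, -, rfl⟩
    exact ⟨hcard i, subset_union_left⟩
  · simp only [mem_image]
    rintro _ ⟨i, -, rfl⟩ _ ⟨i', -, rfl⟩ h
    exact hinter i i' fun hii' => h (hii' ▸ rfl)

lemma ellMin_eq_of_percolates {n k j r : ℕ} {S : Finset (Finset ℕ)}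
    (hSV : S ⊆ (range n).powersetCard j) (hSr : #S = r) (hS : Percolates (range n) k j r S) :
    ellMin n k j r = r := by
  refine IsLeast.csInf_eq ⟨⟨S, hSV, hSr, hS⟩, ?_⟩
  rintro q ⟨A0, -, rfl, hA0⟩
  by_contra! hlt
  exact hlt.not_ge (hSr ▸ card_le_card (hA0.eq_powersetCard_of_card_lt hlt ▸ hSV))

theorem stmt7 (k j r m : ℕ) (hm1 : 2 * j ≤ k + m) (hmj : m < j) (hjk : j ≤ k - 2)
    (hr : 1 ≤ r) :
    ∃ n0, ∀ n ≥ n0,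
      (∀ (M : Finset ℕ) (S : Finset (Finset ℕ)), (∀ J ∈ S, J ⊆ range n) →
        IsStar m j M S → S.card = r → Percolates (range n) k j r S) ∧
      ellMin n k j r = r := by
  refine ⟨(r + 1) * k + (j + 1 + r) + (m + r * (j - m)), fun n hn => ?_⟩
  have hperc : ∀ (M : Finset ℕ) (S : Finset (Finset ℕ)), (∀ J ∈ S, J ⊆ range n) →
      IsStar m j M S → #S = r → Percolates (range n) k j r S := fun _ _ hSn hS hSr =>
    hS.percolates hSn hSr hr hm1 hmj (by omega) (by rw [card_range]; omega)
      (by rw [card_range]; omega)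
  obtain ⟨S, hSn, hS, hSr⟩ := exists_isStar_range (n := n) (r := r) hmj (by omega)
  exact ⟨hperc, ellMin_eq_of_percolates
    (fun A hA => mem_powersetCard.2 ⟨hSn A hA, (hS.2.1 A hA).1⟩) hSr (hperc _ S hSn hS hSr)⟩
end

section
/- Let Z_r be a 2-configuration consisting of r vertex-disjoint graph stars of sizes ⌈1/2⌉, ⌈2/2⌉, …, ⌈r/2⌉ (i.e., sizes 1,1,2,2,…,⌈(r−1)/2⌉,⌈r/2⌉), with centres v_1,…,v_r. If A_0 ⊇ Z_r in the pair bootstrap percolation process on K_n^3 with threshold r (n large enough), then v_r is a joker at time r: every pair of [n] containing v_r lies in A_r. -/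
open Finset

/-- The configuration Z_r: r vertex-disjoint stars of pairs with centres v i and
leaf sets L i of sizes ceil((i+1)/2) for i = 0,...,r-1. -/
def IsZConfig (n r : ℕ) (v : Fin r → ℕ) (Z : Finset (Finset ℕ)) : Prop :=
  ∃ L : Fin r → Finset ℕ,
    (∀ i, L i ⊆ range n ∧ v i ∈ range n ∧ v i ∉ L i ∧ (L i).card = (i.val + 2) / 2) ∧
    (∀ i i', i ≠ i' → Disjoint (insert (v i) (L i)) (insert (v i') (L i'))) ∧
    Z = Finset.univ.biUnion (fun i => (L i).image (fun u => {v i, u}))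

lemma mem_bootStep_of_witnesses {n r : ℕ} {A : Finset (Finset ℕ)}
    {J : Finset ℕ} (hJ : J ∈ (range n).powersetCard 2)
    {W : Finset ℕ} (hWr : r ≤ W.card)
    (hW : ∀ w ∈ W, w ∈ range n ∧ w ∉ J ∧ ∃ Q, Q ∈ A ∧ w ∈ Q ∧ Q ⊆ insert w J) :
    J ∈ bootStep (range n) ((range n).powersetCard 3) 2 r A := by
  classical
  obtain ⟨W', hW'W, hW'card⟩ := Finset.exists_subset_card_eq hWr
  have hJr : J ⊆ range n := (Finset.mem_powersetCard.mp hJ).1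
  have hJ2 : J.card = 2 := (Finset.mem_powersetCard.mp hJ).2
  set g : Fin r → ℕ := fun i => (W'.equivFin.symm (Fin.cast hW'card.symm i) : ℕ) with hg
  have hgW : ∀ i, g i ∈ W := fun i => hW'W (W'.equivFin.symm _).2
  have hginj : Function.Injective g := by
    intro i j h
    have h2 := W'.equivFin.symm.injective (Subtype.ext h)
    exact Fin.ext (by simpa using congrArg Fin.val h2)
  choose Q hQ using fun i => (hW (g i) (hgW i)).2.2
  have hnotJ : ∀ i, g i ∉ J := fun i => (hW _ (hgW i)).2.1
  refine Finset.mem_union_right _ (Finset.mem_filter.mpr ⟨hJ, ?_⟩)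
  refine ⟨fun i => insert (g i) J, Q, ?_, ?_, ?_⟩
  · intro i j h
    apply hginj
    have h1 : g i ∈ insert (g j) J := by
      simp only at h; rw [← h]; exact Finset.mem_insert_self _ _
    rcases Finset.mem_insert.mp h1 with h' | h'
    · exact h'
    · exact absurd h' (hnotJ i)
  · intro i j h
    apply hginj
    have h1 : g i ∈ Q j := by rw [← h]; exact (hQ i).2.1
    have h2 : g i ∈ insert (g j) J := (hQ j).2.2 h1
    rcases Finset.mem_insert.mp h2 with h' | h'
    · exact h'
    · exact absurd h' (hnotJ i)
  · intro i
    refine ⟨?_, (hQ i).1, ?_⟩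
    · refine Finset.mem_powersetCard.mpr ⟨Finset.insert_subset (hW _ (hgW i)).1 hJr, ?_⟩
      rw [Finset.card_insert_of_notMem (hnotJ i), hJ2]
    · exact Finset.union_subset (hQ i).2.2 (Finset.subset_insert _ _)

lemma bootProc_succ (V : Finset ℕ) (E : Finset (Finset ℕ)) (j r : ℕ)
    (A0 : Finset (Finset ℕ)) (t : ℕ) :
    bootProc V E j r A0 (t + 1) = bootStep V E j r (bootProc V E j r A0 t) :=
  Function.iterate_succ_apply' _ _ _

lemma bootProc_mono (V : Finset ℕ) (E : Finset (Finset ℕ)) (j r : ℕ)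
    (A0 : Finset (Finset ℕ)) {s t : ℕ} (h : s ≤ t) :
    bootProc V E j r A0 s ⊆ bootProc V E j r A0 t := by
  induction h with
  | refl => exact subset_rfl
  | step h ih =>
    rw [bootProc_succ]
    exact ih.trans Finset.subset_union_left

theorem stmt11 (r : ℕ) (hr : 1 ≤ r) :
    ∃ n0, ∀ n ≥ n0, ∀ (v : Fin r → ℕ) (Z A0 : Finset (Finset ℕ)),
      IsZConfig n r v Z → A0 ⊆ (range n).powersetCard 2 → Z ⊆ A0 →
      ∀ P ∈ (range n).powersetCard 2, v ⟨r - 1, by omega⟩ ∈ P →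
        P ∈ compProc (range n) 3 2 r A0 r := by
  classical
  use 0
  intro n _ v Z A0 hZc hA0sub hZA0 P hP hvP
  obtain ⟨L, hL, hdisj, hZ⟩ := hZc
  set ir : Fin r := ⟨r - 1, by omega⟩ with hir_def
  have hirval : ir.val = r - 1 := rfl
  have hvmem : ∀ i, v i ∈ range n := fun i => (hL i).2.1
  have hLmem : ∀ i, L i ⊆ range n := fun i => (hL i).1
  have hvnot : ∀ i, v i ∉ L i := fun i => (hL i).2.2.1
  have hcard : ∀ i, (L i).card = (i.val + 2) / 2 := fun i => (hL i).2.2.2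
  have hvv : ∀ i i', i ≠ i' → v i ≠ v i' := by
    intro i i' h hEq
    exact (Finset.disjoint_left.mp (hdisj i i' h) (Finset.mem_insert_self _ _))
      (hEq ▸ Finset.mem_insert_self _ _)
  have hvL : ∀ i i', i ≠ i' → v i ∉ L i' := by
    intro i i' h hmem
    exact Finset.disjoint_left.mp (hdisj i i' h) (Finset.mem_insert_self _ _)
      (Finset.mem_insert_of_mem hmem)
  have hLL : ∀ i i', i ≠ i' → Disjoint (L i) (L i') := fun i i' h =>
    Finset.disjoint_of_subset_left (Finset.subset_insert _ _)
      (Finset.disjoint_of_subset_right (Finset.subset_insert _ _) (hdisj i i' h))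
  have hpairZ : ∀ i, ∀ u ∈ L i, ({v i, u} : Finset ℕ) ∈ Z := by
    intro i u hu
    rw [hZ]
    exact Finset.mem_biUnion.mpr ⟨i, Finset.mem_univ _, Finset.mem_image.mpr ⟨u, hu, rfl⟩⟩
  set A : ℕ → Finset (Finset ℕ) := fun t => compProc (range n) 3 2 r A0 t with hA
  have hAmono : ∀ s t, s ≤ t → A s ⊆ A t := fun s t h => bootProc_mono _ _ _ _ _ h
  have hA0A : ∀ t, A0 ⊆ A t := fun t => hAmono 0 t (Nat.zero_le t)
  have hAsucc : ∀ t, A (t + 1) = bootStep (range n) ((range n).powersetCard 3) 2 r (A t) :=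
    fun t => bootProc_succ _ _ _ _ _ t
  have hpair_mem : ∀ i : Fin r, i ≠ ir → ({v ir, v i} : Finset ℕ) ∈ (range n).powersetCard 2 := by
    intro i h
    refine Finset.mem_powersetCard.mpr ⟨?_, ?_⟩
    · exact Finset.insert_subset (hvmem ir) (Finset.singleton_subset_iff.mpr (hvmem i))
    · rw [Finset.card_insert_of_notMem (by
        simp only [Finset.mem_singleton]; exact hvv ir i (Ne.symm h)), Finset.card_singleton]
  -- the invariant
  have inv : ∀ t, ∀ i : Fin r, i ≠ ir → r ≤ i.val + 2 * t →
      ({v ir, v i} : Finset ℕ) ∈ A t := by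
    intro t
    induction t with
    | zero =>
      intro i hi hle
      exfalso
      have h1 : i.val < r := i.isLt
      have h2 : i.val ≠ r - 1 := fun h => hi (Fin.ext (by omega))
      omega
    | succ t ih =>
      intro i hi hle
      by_cases hc : r ≤ i.val + 2 * t
      · exact hAmono t (t + 1) (Nat.le_succ t) (ih i hi hc)
      · rw [hAsucc t]
        push_neg at hc
        set M : Finset (Fin r) :=
          Finset.univ.filter (fun m => m ≠ ir ∧ m ≠ i ∧ r ≤ m.val + 2 * t) with hM
        have hMmem : ∀ m ∈ M, m ≠ ir ∧ m ≠ i ∧ r ≤ m.val + 2 * t := by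
          intro m hm
          exact (Finset.mem_filter.mp hm).2
        have hMcard : (r - 1) - (r - 2 * t) ≤ M.card := by
          have hsub : Finset.Ico (r - 2 * t) (r - 1) ⊆ M.image Fin.val := by
            intro x hx
            rw [Finset.mem_Ico] at hx
            have hxr : x < r := by omega
            refine Finset.mem_image.mpr ⟨⟨x, hxr⟩, ?_, rfl⟩
            rw [hM, Finset.mem_filter]
            refine ⟨Finset.mem_univ _, ?_, ?_, ?_⟩
            · intro h
              have h2 : x = r - 1 := congrArg Fin.val h
              omega
            · intro h
              have h2 : x = i.val := congrArg Fin.val h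
              omega
            · exact (by omega : r ≤ x + 2 * t)
          calc (r - 1) - (r - 2 * t) = (Finset.Ico (r - 2 * t) (r - 1)).card :=
                (Nat.card_Ico _ _).symm
            _ ≤ (M.image Fin.val).card := Finset.card_le_card hsub
            _ ≤ M.card := Finset.card_image_le
        have hMimg : (M.image v).card = M.card :=
          Finset.card_image_of_injOn (fun a _ b _ h => by
            by_contra hne; exact hvv a b hne h)
        have hd1 : Disjoint (L ir) (L i) := hLL ir i (Ne.symm hi)
        have hd2 : Disjoint (L ir ∪ L i) (M.image v) := by
          rw [Finset.disjoint_right]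
          intro x hx
          obtain ⟨m, hm, rfl⟩ := Finset.mem_image.mp hx
          obtain ⟨hm1, hm2, _⟩ := hMmem m hm
          rw [Finset.mem_union]
          push_neg
          exact ⟨hvL m ir hm1, hvL m i hm2⟩
        apply mem_bootStep_of_witnesses (hpair_mem i hi)
          (W := (L ir ∪ L i) ∪ M.image v)
        · rw [Finset.card_union_of_disjoint hd2, Finset.card_union_of_disjoint hd1,
            hMimg, hcard, hcard, hirval]
          have h1 : i.val < r := i.isLt
          omega
        · intro w hw
          rcases Finset.mem_union.mp hw with hw' | hw'
          · rcases Finset.mem_union.mp hw' with h1 | h1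
            · -- w ∈ L ir
              refine ⟨hLmem ir h1, ?_, {v ir, w}, hA0A t (hZA0 (hpairZ ir w h1)), ?_, ?_⟩
              · intro hmem
                rcases Finset.mem_insert.mp hmem with h | h
                · exact hvnot ir (h ▸ h1)
                · rw [Finset.mem_singleton] at h
                  exact hvL i ir hi (h ▸ h1)
              · exact Finset.mem_insert_of_mem (Finset.mem_singleton_self w)
              · rw [Finset.insert_subset_iff, Finset.singleton_subset_iff]
                exact ⟨Finset.mem_insert_of_mem (Finset.mem_insert_self _ _),
                  Finset.mem_insert_self _ _⟩
            · -- w ∈ L i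
              refine ⟨hLmem i h1, ?_, {v i, w}, hA0A t (hZA0 (hpairZ i w h1)), ?_, ?_⟩
              · intro hmem
                rcases Finset.mem_insert.mp hmem with h | h
                · exact hvL ir i (Ne.symm hi) (h ▸ h1)
                · rw [Finset.mem_singleton] at h
                  exact hvnot i (h ▸ h1)
              · exact Finset.mem_insert_of_mem (Finset.mem_singleton_self w)
              · rw [Finset.insert_subset_iff, Finset.singleton_subset_iff]
                exact ⟨Finset.mem_insert_of_mem (Finset.mem_insert_of_mem
                  (Finset.mem_singleton_self _)), Finset.mem_insert_self _ _⟩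
          · -- w = v m for m ∈ M
            obtain ⟨m, hm, rfl⟩ := Finset.mem_image.mp hw'
            obtain ⟨hm1, hm2, hm3⟩ := hMmem m hm
            refine ⟨hvmem m, ?_, {v ir, v m}, ih m hm1 hm3, ?_, ?_⟩
            · intro hmem
              rcases Finset.mem_insert.mp hmem with h | h
              · exact hvv m ir hm1 h
              · rw [Finset.mem_singleton] at h
                exact hvv m i hm2 h
            · exact Finset.mem_insert_of_mem (Finset.mem_singleton_self _)
            · rw [Finset.insert_subset_iff, Finset.singleton_subset_iff]
              exact ⟨Finset.mem_insert_of_mem (Finset.mem_insert_self _ _),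
                Finset.mem_insert_self _ _⟩
  -- final step: P = {v ir, u}
  show P ∈ A r
  have hPsub : P ⊆ range n := (Finset.mem_powersetCard.mp hP).1
  have hP2 : P.card = 2 := (Finset.mem_powersetCard.mp hP).2
  have hvP' : v ir ∈ P := hvP
  obtain ⟨a, b, hab, hPab⟩ := Finset.card_eq_two.mp hP2
  have hu : ∃ u, u ≠ v ir ∧ P = insert (v ir) {u} := by
    rcases Finset.mem_insert.mp (hPab ▸ hvP') with h | h
    · refine ⟨b, ?_, ?_⟩
      · rw [h]; exact Ne.symm hab
      · rw [hPab, h]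
    · rw [Finset.mem_singleton] at h
      refine ⟨a, ?_, ?_⟩
      · rw [h]; exact hab
      · rw [hPab, h, Finset.pair_comm]
  obtain ⟨u, hune, hPu⟩ := hu
  by_cases hcase1 : u ∈ L ir
  · exact hA0A r (hZA0 (by rw [hPu]; exact hpairZ ir u hcase1))
  by_cases hcase2 : ∃ m : Fin r, m ≠ ir ∧ u = v m
  · obtain ⟨m, hm, hum⟩ := hcase2
    have hr2 : 2 ≤ r := by
      by_contra h
      exact hm (Fin.ext (show m.val = r - 1 by have := m.isLt; omega))
    have hmem := inv (r - 1) m hm (by have := m.isLt; omega)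
    rw [hPu, hum]
    exact hAmono (r - 1) r (by omega) hmem
  · have hgoal : P ∈ A ((r - 1) + 1) → P ∈ A r := by
      rw [show (r - 1) + 1 = r by omega]
      exact id
    apply hgoal
    rw [hAsucc (r - 1)]
    set M : Finset (Fin r) := Finset.univ.erase ir with hM
    have hMcard : M.card = r - 1 := by
      rw [hM, Finset.card_erase_of_mem (Finset.mem_univ _), Finset.card_univ,
        Fintype.card_fin]
    have hMimg : (M.image v).card = M.card :=
      Finset.card_image_of_injOn (fun a' _ b' _ h => by
        by_contra hne; exact hvv a' b' hne h)
    have hd : Disjoint (L ir) (M.image v) := by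
      rw [Finset.disjoint_right]
      intro x hx
      obtain ⟨m, hm, rfl⟩ := Finset.mem_image.mp hx
      exact hvL m ir (Finset.ne_of_mem_erase hm)
    apply mem_bootStep_of_witnesses hP (W := L ir ∪ M.image v)
    · rw [Finset.card_union_of_disjoint hd, hMimg, hMcard, hcard, hirval]
      omega
    · intro w hw
      rcases Finset.mem_union.mp hw with h1 | h1
      · refine ⟨hLmem ir h1, ?_, {v ir, w},
          hA0A (r - 1) (hZA0 (hpairZ ir w h1)), ?_, ?_⟩
        · rw [hPu]
          intro hmem
          rcases Finset.mem_insert.mp hmem with h | h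
          · exact hvnot ir (h ▸ h1)
          · rw [Finset.mem_singleton] at h
            exact hcase1 (h ▸ h1)
        · exact Finset.mem_insert_of_mem (Finset.mem_singleton_self w)
        · rw [Finset.insert_subset_iff, Finset.singleton_subset_iff]
          exact ⟨Finset.mem_insert_of_mem hvP', Finset.mem_insert_self _ _⟩
      · obtain ⟨m, hm, rfl⟩ := Finset.mem_image.mp h1
        have hmir : m ≠ ir := Finset.ne_of_mem_erase hm
        have hr2 : 2 ≤ r := by
          by_contra h
          exact hmir (Fin.ext (show m.val = r - 1 by have := m.isLt; omega))
        refine ⟨hvmem m, ?_, {v ir, v m},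
          inv (r - 1) m hmir (by have := m.isLt; omega), ?_, ?_⟩
        · rw [hPu]
          intro hmem
          rcases Finset.mem_insert.mp hmem with h | h
          · exact hvv m ir hmir h
          · rw [Finset.mem_singleton] at h
            exact hcase2 ⟨m, hmir, h.symm⟩
        · exact Finset.mem_insert_of_mem (Finset.mem_singleton_self _)
        · rw [Finset.insert_subset_iff, Finset.singleton_subset_iff]
          exact ⟨Finset.mem_insert_of_mem hvP', Finset.mem_insert_self _ _⟩
end

section
/- In the tight case j = k−1 with j ≥ 2: if at some time t there exist r distinct joker vertices for A_t, then the process percolates in one more step: A_{t+1} = C([n], j), for n large enough. -/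
open Finset

open Classical in
lemma bootProc_subset (V : Finset ℕ) (E : Finset (Finset ℕ)) (j r : ℕ)
    (A0 : Finset (Finset ℕ)) (h : A0 ⊆ V.powersetCard j) (t : ℕ) :
    bootProc V E j r A0 t ⊆ V.powersetCard j := by
  induction t with
  | zero => exact h
  | succ t ih =>
    rw [bootProc, Function.iterate_succ_apply']
    exact union_subset ih (filter_subset _ _)

theorem stmt13 (k r t n : ℕ) (hk : 3 ≤ k) (hn : k + r - 1 ≤ n)
    (A0 : Finset (Finset ℕ)) (hA0 : A0 ⊆ (range n).powersetCard (k - 1))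
    (R : Finset ℕ) (hR : R ⊆ range n) (hRcard : R.card = r)
    (hjoker : ∀ v ∈ R, ∀ J ∈ (range n).powersetCard (k - 1), v ∈ J →
      J ∈ compProc (range n) k (k - 1) r A0 t) :
    compProc (range n) k (k - 1) r A0 (t + 1) = (range n).powersetCard (k - 1) := by
  classical
  have hAt : compProc (range n) k (k-1) r A0 t ⊆ (range n).powersetCard (k-1) :=
    bootProc_subset _ _ _ _ _ hA0 t
  have hstep : compProc (range n) k (k-1) r A0 (t+1)
      = bootStep (range n) ((range n).powersetCard k) (k-1) r
          (compProc (range n) k (k-1) r A0 t) := by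
    simp only [compProc, bootProc, Function.iterate_succ_apply']
  set A := compProc (range n) k (k-1) r A0 t with hA
  rw [hstep]
  apply Finset.Subset.antisymm
  · exact union_subset hAt (filter_subset _ _)
  · intro J hJ
    by_cases hJA : J ∈ A
    · exact mem_union_left _ hJA
    refine mem_union_right _ (mem_filter.mpr ⟨hJ, ?_⟩)
    obtain ⟨hJsub, hJcard⟩ := mem_powersetCard.mp hJ
    by_cases hRJ : ∃ v ∈ R, v ∈ J
    · obtain ⟨v, hvR, hvJ⟩ := hRJ
      exact absurd (hjoker v hvR J hJ hvJ) hJA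
    push_neg at hRJ
    have hJne : J.Nonempty := card_pos.mp (by omega)
    obtain ⟨x, hx⟩ := hJne
    set e : Fin r → ℕ := fun i => (R.orderIsoOfFin hRcard i : ℕ) with he
    have heR : ∀ i, e i ∈ R := fun i => (R.orderIsoOfFin hRcard i).2
    have heinj : Function.Injective e := fun i i' h => by
      have := (R.orderIsoOfFin hRcard).injective (Subtype.ext h)
      exact this
    have heJ : ∀ i, e i ∉ J := fun i => hRJ _ (heR i)
    have heRange : ∀ i, e i ∈ range n := fun i => hR (heR i)
    refine ⟨fun i => insert (e i) J, fun i => insert (e i) (J.erase x), ?_, ?_, ?_⟩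
    · intro i i' h
      apply heinj
      have h2 : insert (e i) J = insert (e i') J := h
      have : e i ∈ insert (e i') J := h2 ▸ mem_insert_self _ _
      rcases mem_insert.mp this with h' | h'
      · exact h'
      · exact absurd h' (heJ i)
    · intro i i' h
      apply heinj
      have h2 : insert (e i) (J.erase x) = insert (e i') (J.erase x) := h
      have : e i ∈ insert (e i') (J.erase x) := h2 ▸ mem_insert_self _ _
      rcases mem_insert.mp this with h' | h'
      · exact h'
      · exact absurd (mem_of_mem_erase h') (heJ i)
    · intro i
      have hnotmem : e i ∉ J := heJ i
      have hnotmem' : e i ∉ J.erase x := fun h => hnotmem (mem_of_mem_erase h)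
      refine ⟨?_, ?_, ?_⟩
      · rw [mem_powersetCard]
        constructor
        · exact insert_subset (heRange i) hJsub
        · rw [card_insert_of_notMem hnotmem, hJcard]; omega
      · apply hjoker (e i) (heR i)
        · rw [mem_powersetCard]
          constructor
          · exact insert_subset (heRange i) ((erase_subset _ _).trans hJsub)
          · rw [card_insert_of_notMem hnotmem', card_erase_of_mem hx, hJcard]
            omega
        · exact mem_insert_self _ _
      · apply union_subset
        · exact insert_subset_insert _ ((erase_subset _ _))
        · exact (subset_insert _ _)
end

section
/- Let j = k−1 ≥ 3 and let B be a (j−1)-configuration on [n] \ {v} which percolates on the complete (k−1)-uniform hypergraph on [n] \ {v} with threshold r (i.e., B is an (n−1; j−1, r)-configuration). If the v-augmented configuration B_v is contained in A_0, then there exists t with v* ⊆ A_t in the (r, A_0)-process on K_n^k: v becomes a joker. -/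
open Finset

lemma boot_sub {V : Finset ℕ} {E : Finset (Finset ℕ)} {j r : ℕ} {A : Finset (Finset ℕ)}
    (hA : A ⊆ V.powersetCard j) (t : ℕ) :
    bootProc V E j r A t ⊆ V.powersetCard j := by
  classical
  induction t with
  | zero => exact hA
  | succ t ih =>
    rw [bootProc, Function.iterate_succ_apply']
    exact union_subset ih (filter_subset _ _)

lemma embed (n k r : ℕ) (hk : 4 ≤ k) (v : ℕ) (hv : v ∈ range n)
    (B A0 : Finset (Finset ℕ))
    (hB : B ⊆ ((range n).erase v).powersetCard (k - 2))
    (hBA : B.image (insert v) ⊆ A0)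
    (t : ℕ) :
    (bootProc ((range n).erase v) (((range n).erase v).powersetCard (k - 1)) (k - 2) r B t).image
      (insert v) ⊆ compProc (range n) k (k - 1) r A0 t := by
  classical
  induction t with
  | zero => exact hBA
  | succ t ih =>
    simp only [compProc, bootProc, Function.iterate_succ_apply'] at ih ⊢
    intro J' hJ'
    simp only [mem_image] at hJ'
    obtain ⟨J, hJ, rfl⟩ := hJ'
    rw [bootStep, mem_union] at hJ
    rcases hJ with hJ | hJ
    · exact mem_union_left _ (ih (mem_image_of_mem _ hJ))
    · rw [mem_filter] at hJ
      obtain ⟨hJp, K, Js, hKinj, hJsinj, hprop⟩ := hJ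
      apply mem_union_right
      rw [mem_filter]
      rw [mem_powersetCard] at hJp
      have hvJ : v ∉ J := fun h => (mem_erase.1 (hJp.1 h)).1 rfl
      have hsub := boot_sub (V := (range n).erase v) (r := r)
        (E := ((range n).erase v).powersetCard (k - 1)) hB t
      have hvK : ∀ i, v ∉ K i := by
        intro i h
        have := (mem_powersetCard.1 (hprop i).1).1 h
        exact (mem_erase.1 this).1 rfl
      have hvJs : ∀ i, v ∉ Js i := by
        intro i h
        have := (mem_powersetCard.1 (hsub (hprop i).2.1)).1 h
        exact (mem_erase.1 this).1 rfl
      constructor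
      · rw [mem_powersetCard]
        refine ⟨insert_subset hv (hJp.1.trans (erase_subset _ _)), ?_⟩
        rw [card_insert_of_notMem hvJ, hJp.2]; omega
      · refine ⟨fun i => insert v (K i), fun i => insert v (Js i), ?_, ?_, fun i => ⟨?_, ?_, ?_⟩⟩
        · intro a b h
          apply hKinj
          have := congrArg (fun s => Finset.erase s v) h
          simpa [erase_insert (hvK a), erase_insert (hvK b)] using this
        · intro a b h
          apply hJsinj
          have := congrArg (fun s => Finset.erase s v) h
          simpa [erase_insert (hvJs a), erase_insert (hvJs b)] using this
        · have hKp := mem_powersetCard.1 (hprop i).1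
          rw [mem_powersetCard]
          refine ⟨insert_subset hv (hKp.1.trans (erase_subset _ _)), ?_⟩
          rw [card_insert_of_notMem (hvK i), hKp.2]; omega
        · exact ih (mem_image_of_mem _ (hprop i).2.1)
        · rw [insert_union, union_insert, insert_idem]
          exact insert_subset_insert _ (hprop i).2.2

theorem stmt17 (k r : ℕ) (hk : 4 ≤ k) (hr : 1 ≤ r) :
    ∃ n0, ∀ n ≥ n0, ∀ v ∈ range n, ∀ (B A0 : Finset (Finset ℕ)),
      B ⊆ ((range n).erase v).powersetCard (k - 2) →
      Percolates ((range n).erase v) (k - 1) (k - 2) r B →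
      B.image (insert v) ⊆ A0 → A0 ⊆ (range n).powersetCard (k - 1) →
      ∃ t, ∀ J ∈ (range n).powersetCard (k - 1), v ∈ J →
        J ∈ compProc (range n) k (k - 1) r A0 t := by
  refine ⟨0, fun n _ v hv B A0 hB hperc hBA hA0 => ?_⟩
  obtain ⟨t, ht⟩ := hperc
  refine ⟨t, fun J hJ hvJ => ?_⟩
  have hemb := embed n k r hk v hv B A0 hB hBA t
  rw [compProc] at ht
  have hJe : J.erase v ∈ ((range n).erase v).powersetCard (k - 2) := by
    rw [mem_powersetCard] at hJ ⊢
    refine ⟨erase_subset_erase _ hJ.1, ?_⟩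
    rw [card_erase_of_mem hvJ, hJ.2]; omega
  have : J = insert v (J.erase v) := (insert_erase hvJ).symm
  rw [this]
  exact hemb (mem_image_of_mem _ (ht ▸ hJe))
end
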